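/- If E‖ζ^j‖² ≤ S for all j ≥ 0 and λ ∈ [0,1), then E‖Σ_{j=0}^{t-1}(P - W^{t-1-j})ζ^j‖² ≤ S/(1-λ)² ≤ S/(1-λ) · 1/(1-λ), and in particular the consensus error satisfies (1/m)Σᵢ E‖x^t(i) - x̄^t‖² ≤ S/(m(1-λ)²). -/

import Mathlib

/-!
Unrolling the recursion gives `X^t = -∑_{j<t} W^(t-1-j) ζ^j`, and since `P W = P` this turns into
`X^t - P X^t = ∑_{j<t} (P - W^(t-1-j)) ζ^j`. Applying `W^k - P` column by column, each term has
Frobenius norm at most `λ^(t-1-j) ‖ζ^j‖`. Cauchy–Schwarz against the geometric weights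
`λ^(t-1-j)`, whose total is at most `1/(1-λ)`, bounds the square of the sum by
`(1-λ)⁻¹ ∑ λ^(t-1-j) ‖ζ^j‖²`, and taking expectations bounds that by `S/(1-λ)²`.
-/

open MeasureTheory

noncomputable def frobNorm {m d : ℕ} (A : Matrix (Fin m) (Fin d) ℝ) : ℝ :=
  Real.sqrt (∑ i, ∑ j, (A i j) ^ 2)

open Finset

section FrobeniusNorm

attribute [local instance] Matrix.frobeniusNormedAddCommGroup

variable {m d : ℕ}

theorem frobNorm_eq_norm (A : Matrix (Fin m) (Fin d) ℝ) : frobNorm A = ‖A‖ := by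
  rw [frobNorm, Matrix.frobenius_norm_def, Real.sqrt_eq_rpow]
  simp only [Real.norm_eq_abs, Real.rpow_two, sq_abs]

theorem frobNorm_sq (A : Matrix (Fin m) (Fin d) ℝ) :
    frobNorm A ^ 2 = ∑ i, ∑ j, A i j ^ 2 :=
  Real.sq_sqrt (by positivity)

theorem frobNorm_sum_le {ι : Type*} (s : Finset ι) (A : ι → Matrix (Fin m) (Fin d) ℝ) :
    frobNorm (∑ j ∈ s, A j) ≤ ∑ j ∈ s, frobNorm (A j) := by
  simpa only [frobNorm_eq_norm] using norm_sum_le s A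

theorem frobNorm_sq_eq_sum_norm_col_sq (B : Matrix (Fin m) (Fin d) ℝ) :
    frobNorm B ^ 2 = ∑ j, ‖WithLp.toLp 2 fun i => B i j‖ ^ 2 := by
  simp only [frobNorm_sq, EuclideanSpace.real_norm_sq_eq]
  exact sum_comm

theorem frobNorm_mul_le (A : Matrix (Fin m) (Fin m) ℝ) (B : Matrix (Fin m) (Fin d) ℝ) :
    frobNorm (A * B) ≤ ‖Matrix.toEuclideanCLM (𝕜 := ℝ) (n := Fin m) A‖ * frobNorm B := by
  have hcol : ∀ j, (WithLp.toLp 2 fun i => (A * B) i j) =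
      Matrix.toEuclideanCLM (𝕜 := ℝ) (n := Fin m) A (WithLp.toLp 2 fun i => B i j) := by
    intro j
    rw [Matrix.toEuclideanCLM_toLp]
    rfl
  refine le_of_sq_le_sq ?_ (mul_nonneg (norm_nonneg _) (Real.sqrt_nonneg _))
  rw [mul_pow, frobNorm_sq_eq_sum_norm_col_sq, frobNorm_sq_eq_sum_norm_col_sq, mul_sum]
  gcongr with j
  rw [hcol, ← mul_pow]
  exact pow_le_pow_left₀ (norm_nonneg _) (ContinuousLinearMap.le_opNorm _ _) 2

end FrobeniusNorm

theorem sum_range_pow_sub_one_sub_le_inv {lam : ℝ} (hlam0 : 0 ≤ lam) (hlam1 : lam < 1) (t : ℕ) :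
    ∑ j ∈ range t, lam ^ (t - 1 - j) ≤ (1 - lam)⁻¹ := by
  rw [sum_range_reflect (lam ^ ·) t, range_eq_Ico, inv_eq_one_div, ← pow_zero lam]
  exact geom_sum_Ico_le_of_lt_one hlam0 hlam1

theorem sq_sum_geom_weighted_le {lam : ℝ} (hlam0 : 0 ≤ lam) (hlam1 : lam < 1) (a : ℕ → ℝ)
    (t : ℕ) :
    (∑ j ∈ range t, lam ^ (t - 1 - j) * a j) ^ 2 ≤
      (1 - lam)⁻¹ * ∑ j ∈ range t, lam ^ (t - 1 - j) * a j ^ 2 := by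
  calc (∑ j ∈ range t, lam ^ (t - 1 - j) * a j) ^ 2
      ≤ (∑ j ∈ range t, lam ^ (t - 1 - j)) * ∑ j ∈ range t, lam ^ (t - 1 - j) * a j ^ 2 :=
        sum_sq_le_sum_mul_sum_of_sq_le_mul _ (fun j _ => by positivity)
          (fun j _ => by positivity) (fun j _ => le_of_eq (by ring))
    _ ≤ (1 - lam)⁻¹ * ∑ j ∈ range t, lam ^ (t - 1 - j) * a j ^ 2 := by
        gcongr
        exact sum_range_pow_sub_one_sub_le_inv hlam0 hlam1 t

theorem integral_sum_geom_weighted_le {Ω : Type*} [MeasurableSpace Ω] {μ : Measure Ω}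
    {lam S : ℝ} (hlam0 : 0 ≤ lam) (hlam1 : lam < 1) (hS : 0 ≤ S) {f : ℕ → Ω → ℝ}
    (hf : ∀ j, Integrable (f j) μ) (hfS : ∀ j, ∫ ω, f j ω ∂μ ≤ S) (t : ℕ) :
    ∫ ω, ∑ j ∈ range t, lam ^ (t - 1 - j) * f j ω ∂μ ≤ S / (1 - lam) := by
  rw [integral_finsetSum _ fun j _ => (hf j).const_mul _]
  calc ∑ j ∈ range t, ∫ ω, lam ^ (t - 1 - j) * f j ω ∂μ
      ≤ ∑ j ∈ range t, lam ^ (t - 1 - j) * S := by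
        gcongr with j
        rw [integral_const_mul]
        exact mul_le_mul_of_nonneg_left (hfS j) (by positivity)
    _ ≤ (1 - lam)⁻¹ * S := by
        rw [← sum_mul]
        gcongr
        exact sum_range_pow_sub_one_sub_le_inv hlam0 hlam1 t
    _ = S / (1 - lam) := by ring

/-- No integrability of the `f i` is needed: those that are not integrable have integral `0`. -/
theorem sum_integral_le_integral_of_sum_le {Ω ι : Type*} [MeasurableSpace Ω] {μ : Measure Ω}
    (s : Finset ι) {f : ι → Ω → ℝ} {g : Ω → ℝ} (hf : ∀ i ω, 0 ≤ f i ω) (hg : Integrable g μ)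
    (hfg : ∀ ω, ∑ i ∈ s, f i ω ≤ g ω) :
    ∑ i ∈ s, ∫ ω, f i ω ∂μ ≤ ∫ ω, g ω ∂μ := by
  classical
  set u := s.filter fun i => Integrable (f i) μ
  have hdrop : ∑ i ∈ s, ∫ ω, f i ω ∂μ = ∑ i ∈ u, ∫ ω, f i ω ∂μ := by
    refine (sum_filter_of_ne fun i _ hi => ?_).symm
    by_contra hint
    exact hi (integral_undef hint)
  rw [hdrop, ← integral_finsetSum u fun i hi => (mem_filter.mp hi).2]
  refine integral_mono_of_nonneg (.of_forall fun ω => sum_nonneg fun i _ => hf i ω) hg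
    (.of_forall fun ω => ?_)
  exact (sum_le_sum_of_subset_of_nonneg (filter_subset _ s) fun i _ _ => hf i ω).trans (hfg ω)

namespace Matrix

variable {n p R : Type*} [Fintype n] [DecidableEq n] [Ring R]

theorem eq_neg_sum_pow_mul_of_recurrence {W : Matrix n n R} {X ζ : ℕ → Matrix n p R}
    (hX0 : X 0 = 0) (hrec : ∀ t, X (t + 1) = W * X t - ζ t) (t : ℕ) :
    X t = -∑ j ∈ range t, W ^ (t - 1 - j) * ζ j := by
  induction t with
  | zero => simp [hX0]
  | succ t ih =>
    have hshift : ∀ j ∈ range t, W ^ (t + 1 - 1 - j) * ζ j = W * (W ^ (t - 1 - j) * ζ j) := by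
      intro j hj
      rw [show t + 1 - 1 - j = t - 1 - j + 1 by grind, pow_succ', Matrix.mul_assoc]
    rw [hrec, ih, sum_range_succ, sum_congr rfl hshift, ← Matrix.mul_sum,
      show t + 1 - 1 - t = 0 by omega, pow_zero, Matrix.one_mul, Matrix.mul_neg]
    abel

theorem mul_pow_eq_of_mul_eq {P W : Matrix n n R} (hPW : P * W = P) (k : ℕ) : P * W ^ k = P := by
  induction k with
  | zero => exact Matrix.mul_one P
  | succ k ih => rw [pow_succ, ← Matrix.mul_assoc, ih, hPW]

theorem sub_mul_eq_sum_of_recurrence {W P : Matrix n n R} {X ζ : ℕ → Matrix n p R}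
    (hPW : P * W = P) (hX0 : X 0 = 0) (hrec : ∀ t, X (t + 1) = W * X t - ζ t) (t : ℕ) :
    X t - P * X t = ∑ j ∈ range t, (P - W ^ (t - 1 - j)) * ζ j := by
  simp only [eq_neg_sum_pow_mul_of_recurrence hX0 hrec t, Matrix.sub_mul, sum_sub_distrib,
    Matrix.mul_neg, Matrix.mul_sum, ← Matrix.mul_assoc, mul_pow_eq_of_mul_eq hPW]
  abel

end Matrix

theorem frobNorm_sum_sub_pow_mul_sq_le {m d : ℕ} {W P : Matrix (Fin m) (Fin m) ℝ} {lam : ℝ}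
    (hlam0 : 0 ≤ lam) (hlam1 : lam < 1)
    (hop : ∀ k : ℕ, ‖Matrix.toEuclideanCLM (𝕜 := ℝ) (n := Fin m) (W ^ k - P)‖ ≤ lam ^ k)
    (ζ : ℕ → Matrix (Fin m) (Fin d) ℝ) (t : ℕ) :
    frobNorm (∑ j ∈ range t, (P - W ^ (t - 1 - j)) * ζ j) ^ 2 ≤
      (1 - lam)⁻¹ * ∑ j ∈ range t, lam ^ (t - 1 - j) * frobNorm (ζ j) ^ 2 := by
  have hterm : ∀ k (B : Matrix (Fin m) (Fin d) ℝ), frobNorm ((P - W ^ k) * B) ≤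
      lam ^ k * frobNorm B := fun k B =>
    (frobNorm_mul_le _ B).trans <| by
      rw [map_sub, norm_sub_rev, ← map_sub]
      exact mul_le_mul_of_nonneg_right (hop k) (Real.sqrt_nonneg _)
  calc frobNorm (∑ j ∈ range t, (P - W ^ (t - 1 - j)) * ζ j) ^ 2
      ≤ (∑ j ∈ range t, lam ^ (t - 1 - j) * frobNorm (ζ j)) ^ 2 :=
        pow_le_pow_left₀ (Real.sqrt_nonneg _)
          ((frobNorm_sum_le _ _).trans (sum_le_sum fun j _ => hterm _ _)) 2
    _ ≤ _ := sq_sum_geom_weighted_le hlam0 hlam1 _ t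

theorem consensus_error_second_moment_bound_general {m d : ℕ}
    {Ω : Type*} [MeasurableSpace Ω] (μ : Measure Ω)
    (W P : Matrix (Fin m) (Fin m) ℝ) (lam S : ℝ)
    (hlam0 : 0 ≤ lam) (hlam1 : lam < 1) (hS : 0 ≤ S)
    (hPW : P * W = P)
    (hop : ∀ k : ℕ, ‖Matrix.toEuclideanCLM (𝕜 := ℝ) (n := Fin m) (W ^ k - P)‖ ≤ lam ^ k)
    (X ζ : ℕ → Ω → Matrix (Fin m) (Fin d) ℝ)
    (hX0 : ∀ ω, X 0 ω = 0)
    (hrec : ∀ t ω, X (t + 1) ω = W * X t ω - ζ t ω)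
    (hint : ∀ j, Integrable (fun ω => frobNorm (ζ j ω) ^ 2) μ)
    (hζ : ∀ j, ∫ ω, frobNorm (ζ j ω) ^ 2 ∂μ ≤ S)
    (t : ℕ) :
    (∫ ω, frobNorm (∑ j ∈ Finset.range t, (P - W ^ (t - 1 - j)) * ζ j ω) ^ 2 ∂μ
        ≤ S / (1 - lam) ^ 2) ∧
      (1 / (m : ℝ)) * ∑ i : Fin m,
          ∫ ω, (∑ j : Fin d, ((X t ω - P * X t ω) i j) ^ 2) ∂μ
        ≤ S / ((m : ℝ) * (1 - lam) ^ 2) := by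
  set g : Ω → ℝ := fun ω => (1 - lam)⁻¹ * ∑ j ∈ range t, lam ^ (t - 1 - j) * frobNorm (ζ j ω) ^ 2
  have hg_int : Integrable g μ :=
    (integrable_finsetSum _ fun j _ => (hint j).const_mul _).const_mul _
  have hg_le : ∫ ω, g ω ∂μ ≤ S / (1 - lam) ^ 2 := by
    calc ∫ ω, g ω ∂μ
        = (1 - lam)⁻¹ * ∫ ω, ∑ j ∈ range t, lam ^ (t - 1 - j) * frobNorm (ζ j ω) ^ 2 ∂μ :=
          integral_const_mul _ _
      _ ≤ (1 - lam)⁻¹ * (S / (1 - lam)) := by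
          gcongr
          exact integral_sum_geom_weighted_le hlam0 hlam1 hS hint hζ t
      _ = S / (1 - lam) ^ 2 := by rw [inv_mul_eq_div, div_div, sq]
  have hpoint : ∀ ω, frobNorm (∑ j ∈ range t, (P - W ^ (t - 1 - j)) * ζ j ω) ^ 2 ≤ g ω :=
    fun ω => frobNorm_sum_sub_pow_mul_sq_le hlam0 hlam1 hop (ζ · ω) t
  have hconsensus : ∀ ω, X t ω - P * X t ω = ∑ j ∈ range t, (P - W ^ (t - 1 - j)) * ζ j ω :=
    fun ω => Matrix.sub_mul_eq_sum_of_recurrence (X := (X · ω)) (ζ := (ζ · ω)) hPW (hX0 ω)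
      (hrec · ω) t
  refine ⟨(integral_mono_of_nonneg (.of_forall fun ω => sq_nonneg _) hg_int
    (.of_forall hpoint)).trans hg_le, ?_⟩
  have hrows := sum_integral_le_integral_of_sum_le univ
    (f := fun i ω => ∑ j, ((X t ω - P * X t ω) i j) ^ 2)
    (fun i ω => sum_nonneg fun j _ => sq_nonneg _) hg_int fun ω => by rw [← frobNorm_sq, hconsensus]; exact hpoint ω
  calc (1 / (m : ℝ)) * ∑ i : Fin m, ∫ ω, (∑ j : Fin d, ((X t ω - P * X t ω) i j) ^ 2) ∂μ
      ≤ (1 / (m : ℝ)) * (S / (1 - lam) ^ 2) := by gcongr; exact hrows.trans hg_le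
    _ = S / ((m : ℝ) * (1 - lam) ^ 2) := by rw [one_div_mul_eq_div, div_div, mul_comm]

/-- If `E‖ζ^j‖² ≤ S` for all `j` and `λ ∈ [0,1)`, then
`E‖Σ_{j<t}(P - W^{t-1-j})ζ^j‖² ≤ S/(1-λ)²`, and the consensus error satisfies
`(1/m)Σᵢ E‖x^t(i) - x̄^t‖² ≤ S/(m(1-λ)²)`. -/
theorem consensus_error_second_moment_bound {m d : ℕ} (hm : 0 < m)
    {Ω : Type*} [MeasurableSpace Ω] (μ : Measure Ω) [IsProbabilityMeasure μ]
    (W P : Matrix (Fin m) (Fin m) ℝ) (lam S : ℝ)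
    (hlam0 : 0 ≤ lam) (hlam1 : lam < 1) (hS : 0 ≤ S)
    (hP : P = Matrix.of fun _ _ => 1 / (m : ℝ))
    (hWP : W * P = P) (hPW : P * W = P)
    (hop : ∀ k : ℕ, ‖Matrix.toEuclideanCLM (𝕜 := ℝ) (n := Fin m) (W ^ k - P)‖ ≤ lam ^ k)
    (X ζ : ℕ → Ω → Matrix (Fin m) (Fin d) ℝ)
    (hX0 : ∀ ω, X 0 ω = 0)
    (hrec : ∀ t ω, X (t + 1) ω = W * X t ω - ζ t ω)
    (hint : ∀ j, Integrable (fun ω => frobNorm (ζ j ω) ^ 2) μ)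
    (hζ : ∀ j, ∫ ω, frobNorm (ζ j ω) ^ 2 ∂μ ≤ S)
    (t : ℕ) :
    (∫ ω, frobNorm (∑ j ∈ Finset.range t, (P - W ^ (t - 1 - j)) * ζ j ω) ^ 2 ∂μ
        ≤ S / (1 - lam) ^ 2) ∧
      (1 / (m : ℝ)) * ∑ i : Fin m,
          ∫ ω, (∑ j : Fin d, ((X t ω - P * X t ω) i j) ^ 2) ∂μ
        ≤ S / ((m : ℝ) * (1 - lam) ^ 2) :=
  consensus_error_second_moment_bound_general μ W P lam S hlam0 hlam1 hS hPW hop X ζ hX0 hrec hint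
    hζ t
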